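/- arXiv:1411.4092 — 2 statements merged into one kernel-verified Lean document; each statement's English description precedes it below -/
import Mathlib

section
/- For b ≥ 1 and a coprime to b, inv(a,b) = (b-1)(b-2)/2 if and only if a ≡ -1 (mod b). -/
/-- The sawtooth function ((x)): 0 if x is an integer, else x - ⌊x⌋ - 1/2. -/
def sawtooth (x : ℚ) : ℚ := if x.den = 1 then 0 else x - ⌊x⌋ - 1/2

/-- The Dedekind sum s(a,b) = ∑_{i=1}^{b-1} (i/b)·((a·i/b)). -/
def dedekindSum (a b : ℕ) : ℚ :=
  ∑ i ∈ Finset.Icc 1 (b - 1), (i : ℚ) / (b : ℚ) * sawtooth ((a * i : ℕ) / (b : ℚ))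

/-- Representative of a·x mod b in {1, ..., b}. -/
def modRep (a b x : ℕ) : ℕ := if a * x % b = 0 then b else a * x % b

/-- inv(a,b): number of pairs 1 ≤ i < j ≤ b with a·i mod b > a·j mod b
(representatives in {1,...,b}). -/
def invNum (a b : ℕ) : ℕ :=
  ((Finset.Icc 1 b ×ˢ Finset.Icc 1 b).filter
    (fun p => p.1 < p.2 ∧ modRep a b p.2 < modRep a b p.1)).card

/-!
Since `modRep a b b = b` is the largest possible value, every inversion is a pair `i < j` in
`[1, b - 1]`, and there are `(b - 1)(b - 2) / 2` such pairs. So the maximum is attained exactly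
when `modRep a b` is strictly decreasing on `[1, b - 1]`. A strictly decreasing chain of `b - 1`
positive integers starts at `b - 1` or higher, so `a mod b = modRep a b 1 = b - 1`. Conversely,
for `a ≡ -1` we have `modRep a b x = b - x` on `[1, b - 1]`.
-/

open Finset

lemma card_filter_lt_Icc_one_product (n : ℕ) :
    #{p ∈ Icc 1 n ×ˢ Icc 1 n | p.1 < p.2} = n * (n - 1) / 2 := by
  have fiber : ∀ j ∈ Icc 1 n, #{i ∈ Icc 1 n | i < j} = j - 1 := fun j hj => by
    rw [show {i ∈ Icc 1 n | i < j} = Ico 1 j by ext; simp at hj ⊢; omega, Nat.card_Ico]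
  calc #{p ∈ Icc 1 n ×ˢ Icc 1 n | p.1 < p.2}
      = ∑ j ∈ Icc 1 n, #{i ∈ Icc 1 n | i < j} := by
        simp only [card_filter, sum_product_right]
    _ = ∑ j ∈ Icc 1 n, (j - 1) := sum_congr rfl fiber
    _ = ∑ j ∈ range n, j := by
        rw [← Ico_add_one_right_eq_Icc, sum_Ico_eq_sum_range]
        simp
    _ = n * (n - 1) / 2 := sum_range_id n

lemma Nat.apply_add_sub_le_of_strictAntiOn {f : ℕ → ℕ} {m n : ℕ}
    (hf : StrictAntiOn f (Set.Icc m n)) (hmn : m ≤ n) : f n + (n - m) ≤ f m := by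
  induction n, hmn using Nat.le_induction with
  | base => simp
  | succ n hmn ih =>
    have hstep : f (n + 1) < f n := hf ⟨hmn, n.le_succ⟩ ⟨by omega, le_rfl⟩ n.lt_succ_self
    have := ih (hf.mono (Set.Icc_subset_Icc_right n.le_succ))
    omega

section modRep

variable {a b x : ℕ}

lemma modRep_pos (hb : 0 < b) : 0 < modRep a b x := by
  unfold modRep; split <;> omega

lemma modRep_le (hb : 0 < b) : modRep a b x ≤ b := by
  have := Nat.mod_lt (a * x) hb
  unfold modRep; split <;> omega

lemma modRep_self : modRep a b b = b := by
  simp [modRep]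

lemma modRep_one (ha : a % b ≠ 0) : modRep a b 1 = a % b := by
  simp [modRep, ha]

lemma modRep_eq_sub (ha : (a + 1) % b = 0) (hx : 0 < x) (hxb : x < b) :
    modRep a b x = b - x := by
  have hmod : a * x % b = b - x := by
    have : a * x + x ≡ b - x + x [MOD b] := by
      rw [Nat.sub_add_cancel hxb.le, ← Nat.succ_mul]
      exact (Nat.modEq_zero_iff_dvd.2 ((Nat.dvd_of_mod_eq_zero ha).mul_right x)).trans
        (Nat.modEq_zero_iff_dvd.2 dvd_rfl).symm
    rw [Nat.ModEq.add_right_cancel' x this, Nat.mod_eq_of_lt (by omega)]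
  simp only [modRep, hmod]
  rw [if_neg (by omega)]

end modRep

lemma invNum_eq_card_filter {a b : ℕ} (hb : 0 < b) :
    invNum a b = #{p ∈ Icc 1 (b - 1) ×ˢ Icc 1 (b - 1) |
      p.1 < p.2 ∧ modRep a b p.2 < modRep a b p.1} := by
  unfold invNum
  congr 1
  ext ⟨i, j⟩
  have hi := modRep_le (a := a) (x := i) hb
  have hbb := modRep_self (a := a) (b := b)
  simp only [mem_filter, mem_product, mem_Icc]
  constructor
  · rintro ⟨⟨⟨hi1, hib⟩, hj1, hjb⟩, hij, hinv⟩
    have : j ≠ b := by rintro rfl; omega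
    omega
  · omega

lemma invNum_eq_iff_strictAntiOn {a b : ℕ} (hb : 0 < b) :
    invNum a b = (b - 1) * (b - 2) / 2 ↔ StrictAntiOn (modRep a b) (Set.Icc 1 (b - 1)) := by
  rw [invNum_eq_card_filter hb, ← filter_filter, show b - 2 = b - 1 - 1 by omega,
    ← card_filter_lt_Icc_one_product, card_filter_eq_iff]
  simp only [StrictAntiOn, mem_filter, mem_product, mem_Icc, Set.mem_Icc, and_imp, Prod.forall]
  exact ⟨fun h i hi1 hib j hj1 hjb => h i j hi1 hib hj1 hjb,
    fun h i j hi1 hib hj1 hjb => h hi1 hib hj1 hjb⟩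

theorem stmt5 (a b : ℕ) (hb : 1 ≤ b) (h : Nat.Coprime a b) :
    invNum a b = (b - 1) * (b - 2) / 2 ↔ (a + 1) % b = 0 := by
  rw [invNum_eq_iff_strictAntiOn hb]
  constructor
  · intro hanti
    obtain rfl | hb2 := hb.eq_or_lt
    · exact Nat.mod_one _
    have ha : a % b ≠ 0 := fun h0 =>
      hb2.ne' (h.symm.eq_one_of_dvd (Nat.dvd_of_mod_eq_zero h0))
    have hchain := Nat.apply_add_sub_le_of_strictAntiOn hanti (by omega)
    have hlast := modRep_pos (a := a) (x := b - 1) hb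
    rw [modRep_one ha] at hchain
    have := Nat.mod_lt a hb
    rw [Nat.add_mod, Nat.one_mod_eq_one.2 hb2.ne', show a % b = b - 1 by omega,
      Nat.sub_add_cancel hb, Nat.mod_self]
  · intro ha i hi j hj hij
    have := hj.2
    rw [modRep_eq_sub ha hi.1 (by omega), modRep_eq_sub ha hj.1 (by omega)]
    omega
end

section
/- For b ≥ 1 and any a coprime to b, the Dedekind sum satisfies -(b-1)(b-2)/(12b) ≤ s(a,b) ≤ (b-1)(b-2)/(12b), with the maximum attained exactly at a ≡ 1 (mod b) and the minimum exactly at a ≡ -1 (mod b). -/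
/-!
Since `a` is coprime to `b`, `σ i = a * i % b` permutes `{1, …, b - 1}`, and on that range
`((a * i / b)) = σ i / b - 1 / 2`. Hence `s(a, b) = (∑ i * σ i) / b ^ 2 - (b - 1) / 4`, and because
`σ` preserves `∑ i` and `∑ i ^ 2`, the two nonnegative sums `∑ (i - σ i) ^ 2` and
`∑ (i + σ i - b) ^ 2` measure exactly the distance of `s(a, b)` to the upper and to the lower bound.
They vanish iff `σ` is the identity, resp. the reflection `i ↦ b - i`, i.e. iff `a ≡ 1`, resp.
`a ≡ -1 (mod b)`.
-/

open Finset

theorem Finset.sum_Icc_one_cast_id (n : ℕ) : ∑ i ∈ Icc 1 n, (i : ℚ) = n * (n + 1) / 2 := by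
  induction n with
  | zero => simp
  | succ n ih => rw [sum_Icc_succ_top (Nat.le_add_left 1 n), ih]; push_cast; ring

theorem Finset.sum_Icc_one_cast_sq (n : ℕ) :
    ∑ i ∈ Icc 1 n, (i : ℚ) ^ 2 = n * (n + 1) * (2 * n + 1) / 6 := by
  induction n with
  | zero => simp
  | succ n ih => rw [sum_Icc_succ_top (Nat.le_add_left 1 n), ih]; push_cast; ring

theorem Set.BijOn.finset_sum_comp {ι M : Type*} [AddCommMonoid M] {s : Finset ι} {σ : ι → ι}
    (hσ : Set.BijOn σ s s) (g : ι → M) : ∑ i ∈ s, g (σ i) = ∑ i ∈ s, g i :=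
  sum_nbij σ hσ.mapsTo hσ.injOn hσ.surjOn fun _ _ => rfl

theorem Set.BijOn.sum_sq_sub_comp {ι R : Type*} [CommRing R] {s : Finset ι} {σ : ι → ι}
    (hσ : Set.BijOn σ s s) (x : ι → R) :
    ∑ i ∈ s, (x i - x (σ i)) ^ 2 = 2 * (∑ i ∈ s, x i ^ 2 - ∑ i ∈ s, x i * x (σ i)) := by
  have hcomp := hσ.finset_sum_comp fun i => x i ^ 2
  have hexpand : ∀ i, (x i - x (σ i)) ^ 2 = x i ^ 2 + x (σ i) ^ 2 - 2 * (x i * x (σ i)) :=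
    fun i => by ring
  simp only [hexpand, sum_add_distrib, sum_sub_distrib, ← mul_sum, hcomp]
  ring

theorem Set.BijOn.sum_sq_add_comp_sub {ι R : Type*} [CommRing R] {s : Finset ι} {σ : ι → ι}
    (hσ : Set.BijOn σ s s) (x : ι → R) (c : R) :
    ∑ i ∈ s, (x i + x (σ i) - c) ^ 2 =
      2 * (∑ i ∈ s, x i ^ 2 + ∑ i ∈ s, x i * x (σ i)) - 4 * c * ∑ i ∈ s, x i + #s * c ^ 2 := by
  have hcomp₁ := hσ.finset_sum_comp x
  have hcomp₂ := hσ.finset_sum_comp fun i => x i ^ 2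
  have hexpand : ∀ i, (x i + x (σ i) - c) ^ 2 = x i ^ 2 + x (σ i) ^ 2 + 2 * (x i * x (σ i))
      - 2 * c * x i - 2 * c * x (σ i) + c ^ 2 := fun i => by ring
  simp only [hexpand, sum_add_distrib, sum_sub_distrib, ← mul_sum, sum_const, nsmul_eq_mul,
    hcomp₁, hcomp₂]
  ring

theorem sawtooth_eq_fract_sub_half {x : ℚ} (hx : x.den ≠ 1) : sawtooth x = Int.fract x - 1 / 2 := by
  rw [sawtooth, if_neg hx, Int.fract]

theorem sawtooth_natCast_div {q b : ℕ} (hb : b ≠ 0) (hq : ¬ b ∣ q) :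
    sawtooth ((q : ℚ) / b) = ((q % b : ℕ) : ℚ) / b - 1 / 2 := by
  have hmod : ((q % b : ℕ) : ℚ) ≠ 0 := by exact_mod_cast mt Nat.dvd_of_mod_eq_zero hq
  rw [sawtooth_eq_fract_sub_half, Int.fract_div_natCast_eq_div_natCast_mod]
  intro hden
  have hfract := Int.fract_intCast (R := ℚ) ((q : ℚ) / b).num
  rw [(Rat.den_eq_one_iff _).mp hden, Int.fract_div_natCast_eq_div_natCast_mod] at hfract
  exact div_ne_zero hmod (Nat.cast_ne_zero.mpr hb) hfract

theorem not_dvd_mul_of_coprime {a b i : ℕ} (h : a.Coprime b) (hi : i ∈ Icc 1 (b - 1)) :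
    ¬ b ∣ a * i := by
  rw [mem_Icc] at hi
  intro hdvd
  have := Nat.le_of_dvd (by omega) ((Nat.coprime_comm.mp h).dvd_of_dvd_mul_left hdvd)
  omega

theorem bijOn_mul_mod {a b : ℕ} (h : a.Coprime b) :
    Set.BijOn (fun i => a * i % b) (Icc 1 (b - 1) : Set ℕ) (Icc 1 (b - 1)) := by
  have hmaps : Set.MapsTo (fun i => a * i % b) (Icc 1 (b - 1) : Set ℕ) (Icc 1 (b - 1)) := by
    intro i hi
    have h0 := mt Nat.dvd_of_mod_eq_zero (not_dvd_mul_of_coprime h hi)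
    simp only [coe_Icc, Set.mem_Icc] at hi ⊢
    have hlt : a * i % b < b := Nat.mod_lt _ (by omega)
    omega
  refine ((finite_toSet _).injOn_iff_bijOn_of_mapsTo hmaps).mp fun i hi j hj hij => ?_
  simp only [coe_Icc, Set.mem_Icc] at hi hj
  have := Nat.ModEq.cancel_left_of_coprime (Nat.coprime_comm.mp h).gcd_eq_one hij
  rwa [Nat.ModEq, Nat.mod_eq_of_lt (by omega), Nat.mod_eq_of_lt (by omega)] at this

theorem dedekindSum_eq_of_coprime {a b : ℕ} (hb : 0 < b) (h : a.Coprime b) :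
    dedekindSum a b = (∑ i ∈ Icc 1 (b - 1), (i : ℚ) * (a * i % b : ℕ)) / b ^ 2 - (b - 1) / 4 := by
  have hterm : ∀ i ∈ Icc 1 (b - 1), (i : ℚ) / b * sawtooth ((a * i : ℕ) / (b : ℚ)) =
      (i : ℚ) * (a * i % b : ℕ) / b ^ 2 - (i : ℚ) / (2 * b) := fun i hi => by
    rw [sawtooth_natCast_div hb.ne' (not_dvd_mul_of_coprime h hi)]
    field_simp
  rw [dedekindSum, sum_congr rfl hterm, sum_sub_distrib, ← sum_div, ← sum_div,
    sum_Icc_one_cast_id, Nat.cast_pred hb]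
  field_simp
  ring

theorem dedekindSum_eq_sub_sum_sq {a b : ℕ} (hb : 0 < b) (h : a.Coprime b) :
    dedekindSum a b = ((b : ℚ) - 1) * ((b : ℚ) - 2) / (12 * b) -
      (∑ i ∈ Icc 1 (b - 1), ((i : ℚ) - (a * i % b : ℕ)) ^ 2) / (2 * b ^ 2) := by
  rw [(bijOn_mul_mod h).sum_sq_sub_comp (fun i => (i : ℚ)), dedekindSum_eq_of_coprime hb h,
    sum_Icc_one_cast_sq, Nat.cast_pred hb]
  field_simp
  ring

theorem dedekindSum_eq_sum_sq_sub {a b : ℕ} (hb : 0 < b) (h : a.Coprime b) :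
    dedekindSum a b = (∑ i ∈ Icc 1 (b - 1), ((i : ℚ) + (a * i % b : ℕ) - b) ^ 2) / (2 * b ^ 2) -
      ((b : ℚ) - 1) * ((b : ℚ) - 2) / (12 * b) := by
  rw [(bijOn_mul_mod h).sum_sq_add_comp_sub (fun i => (i : ℚ)), dedekindSum_eq_of_coprime hb h,
    sum_Icc_one_cast_sq, sum_Icc_one_cast_id, Nat.card_Icc, Nat.add_sub_cancel, Nat.cast_pred hb]
  field_simp
  ring

theorem forall_mul_mod_eq_self_iff {a b : ℕ} (hb : 0 < b) :
    (∀ i ∈ Icc 1 (b - 1), a * i % b = i) ↔ a % b = 1 % b := by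
  constructor
  · intro hfix
    obtain rfl | hb2 : b = 1 ∨ 2 ≤ b := by omega
    · simp [Nat.mod_one]
    · simpa [Nat.mod_eq_of_lt hb2] using hfix 1 (mem_Icc.mpr ⟨le_rfl, by omega⟩)
  · intro ha i hi
    rw [mem_Icc] at hi
    rw [Nat.mul_mod, ha, ← Nat.mul_mod, one_mul, Nat.mod_eq_of_lt (by omega)]

theorem forall_add_mul_mod_eq_iff {a b : ℕ} (hb : 0 < b) :
    (∀ i ∈ Icc 1 (b - 1), i + a * i % b = b) ↔ (a + 1) % b = 0 := by
  constructor
  · intro hrefl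
    obtain rfl | hb2 : b = 1 ∨ 2 ≤ b := by omega
    · simp [Nat.mod_one]
    · have h1 := hrefl 1 (mem_Icc.mpr ⟨le_rfl, by omega⟩)
      rw [mul_one] at h1
      rw [Nat.add_mod, Nat.mod_eq_of_lt hb2, add_comm, h1, Nat.mod_self]
  · intro ha i hi
    rw [mem_Icc] at hi
    have hdvd : b ∣ i + a * i % b := by
      have : b ∣ (a + 1) * i := (Nat.dvd_of_mod_eq_zero ha).mul_right i
      rwa [add_mul, one_mul, ← Nat.mod_add_div (a * i) b, add_comm, ← add_assoc,
        Nat.dvd_add_left (dvd_mul_right b _)] at this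
    obtain ⟨k, hk⟩ := hdvd
    have hlt : a * i % b < b := Nat.mod_lt _ hb
    rcases k with _ | _ | k
    · omega
    · simpa using hk
    · have : b * 2 ≤ b * (k + 1 + 1) := Nat.mul_le_mul_left b (by omega)
      omega

theorem dedekindSum_le {a b : ℕ} (hb : 0 < b) (h : a.Coprime b) :
    dedekindSum a b ≤ ((b : ℚ) - 1) * ((b : ℚ) - 2) / (12 * b) := by
  rw [dedekindSum_eq_sub_sum_sq hb h]
  exact sub_le_self _ (by positivity)

theorem dedekindSum_eq_bound_iff {a b : ℕ} (hb : 0 < b) (h : a.Coprime b) :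
    dedekindSum a b = ((b : ℚ) - 1) * ((b : ℚ) - 2) / (12 * b) ↔ a % b = 1 % b := by
  rw [dedekindSum_eq_sub_sum_sq hb h, sub_eq_self, div_eq_zero_iff,
    sum_eq_zero_iff_of_nonneg fun _ _ => sq_nonneg _, ← forall_mul_mod_eq_self_iff hb]
  simp [sub_eq_zero, eq_comm, hb.ne']

theorem neg_le_dedekindSum {a b : ℕ} (hb : 0 < b) (h : a.Coprime b) :
    -(((b : ℚ) - 1) * ((b : ℚ) - 2) / (12 * b)) ≤ dedekindSum a b := by
  rw [dedekindSum_eq_sum_sq_sub hb h, neg_le_sub_iff_le_add, le_add_iff_nonneg_left]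
  positivity

theorem dedekindSum_eq_neg_bound_iff {a b : ℕ} (hb : 0 < b) (h : a.Coprime b) :
    dedekindSum a b = -(((b : ℚ) - 1) * ((b : ℚ) - 2) / (12 * b)) ↔ (a + 1) % b = 0 := by
  rw [dedekindSum_eq_sum_sq_sub hb h, sub_eq_neg_self, div_eq_zero_iff,
    sum_eq_zero_iff_of_nonneg fun _ _ => sq_nonneg _, ← forall_add_mul_mod_eq_iff hb]
  simp only [pow_eq_zero_iff two_ne_zero, sub_eq_zero, ← Nat.cast_add, Nat.cast_inj]
  simp [hb.ne']

theorem stmt19 (a b : ℕ) (hb : 1 ≤ b) (h : Nat.Coprime a b) :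
    (-(((b : ℚ) - 1) * ((b : ℚ) - 2) / (12 * b)) ≤ dedekindSum a b ∧
      dedekindSum a b ≤ ((b : ℚ) - 1) * ((b : ℚ) - 2) / (12 * b)) ∧
    (dedekindSum a b = ((b : ℚ) - 1) * ((b : ℚ) - 2) / (12 * b) ↔ a % b = 1 % b) ∧
    (dedekindSum a b = -(((b : ℚ) - 1) * ((b : ℚ) - 2) / (12 * b)) ↔ (a + 1) % b = 0) :=
  ⟨⟨neg_le_dedekindSum hb h, dedekindSum_le hb h⟩, dedekindSum_eq_bound_iff hb h,
    dedekindSum_eq_neg_bound_iff hb h⟩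
end
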